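/- arXiv:math/0506274 — 2 statements merged into one kernel-verified Lean document; each statement's English description precedes it below -/
import Mathlib

section
/- Let X_l = [l][l+1]/q^l and define g_{k,m}(q) = h_{2m-k}({1}^{k-m+1},{q}^{k-m}) + h_{2m-k}({1}^{k-m},{q}^{k-m+1}). Then for all integers m ≥ 1 and l ≥ 1, X_l^m + X_{l-1}^m = ∑_{k≥0} g_{m,m-k}(q) [l]^{2(m-k)} q^{-l(m-k)}. -/
/-- `hh q r s n` is the complete homogeneous symmetric function `h_n({1}^r, {q}^s)`. -/
noncomputable def hh {K : Type*} [CommSemiring K] (q : K) (r s : ℕ) (n : ℕ) : K :=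
  PowerSeries.coeff n
    ((PowerSeries.mk fun _ => (1 : K)) ^ r * (PowerSeries.mk fun k => q ^ k) ^ s)

/-- `h_n({1}^r,{q}^s)` with integer arguments, zero when `r < 0`, `s < 0` or `n < 0`. -/
noncomputable def hz {K : Type*} [CommSemiring K] (q : K) (r s n : ℤ) : K :=
  if 0 ≤ r ∧ 0 ≤ s ∧ 0 ≤ n then hh q r.toNat s.toNat n.toNat else 0

/-- `g_{k,m}(q) = h_{2m-k}({1}^{k-m+1},{q}^{k-m}) + h_{2m-k}({1}^{k-m},{q}^{k-m+1})`. -/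
noncomputable def gdef {K : Type*} [CommSemiring K] (q : K) (k m : ℤ) : K :=
  hz q (k - m + 1) (k - m) (2 * m - k) + hz q (k - m) (k - m + 1) (2 * m - k)

/-- The q-integer `[n] = (1-q^n)/(1-q)`. -/
noncomputable def qint {K : Type*} [Field K] (q : K) (n : ℕ) : K := (1 - q ^ n) / (1 - q)

/-- `X_l = [l][l+1]/q^l`. -/
noncomputable def Xl {K : Type*} [Field K] (q : K) (l : ℕ) : K :=
  qint q l * qint q (l + 1) / q ^ l

/-! With `u = [l]`, put `a = [l][l+1]` and `b = q[l-1][l]`, so that `X_l = a / q^l` and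
`X_{l-1} = b / q^l`. Then `a + b = (1+q) y` and `ab = q y² - y z` for `y = u²`, `z = q^l`, so
`p_m = a^m + b^m` obeys Newton's recurrence `p_{m+2} = (1+q) y p_{m+1} - (q y² - y z) p_m`.
Writing `p_m = ∑_{i+j=m} g_{m,m-i} z^i y^j`, it suffices that the `g` satisfy
`g_{m+2,m+2-k} = (1+q) g_{m+1,m+1-k} - q g_{m,m-k} + g_{m,m-k+1}`, which is the coefficient form of
`1/((1-x)^r (1-qx)^s) = (1-x)(1-qx) / ((1-x)^(r+1) (1-qx)^(s+1))`. -/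

open PowerSeries

section Series
variable {K : Type*} [CommRing K] (q : K)

theorem mk_pow_mul_one_sub_C_mul_X :
    (mk fun n => q ^ n : K⟦X⟧) * (1 - C q * X) = 1 := by
  simpa [rescale_mk, rescale_X] using congrArg (rescale q) (mk_one_mul_one_sub_eq_one K)

theorem hh_series_eq_mul (r s : ℕ) :
    (mk fun _ => (1 : K)) ^ r * (mk fun k => q ^ k) ^ s =
      (1 - X) * (1 - C q * X) *
        ((mk fun _ => (1 : K)) ^ (r + 1) * (mk fun k => q ^ k) ^ (s + 1)) := by
  have h : (mk fun _ => (1 : K)) * (1 - X) = 1 := mk_one_mul_one_sub_eq_one K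
  calc _ = ((mk fun _ => (1 : K)) * (1 - X)) * ((mk fun k => q ^ k) * (1 - C q * X)) *
        ((mk fun _ => (1 : K)) ^ r * (mk fun k => q ^ k) ^ s) := by
        rw [h, mk_pow_mul_one_sub_C_mul_X, one_mul, one_mul]
    _ = _ := by ring

theorem coeff_one_sub_X_mul_one_sub_C_mul_X_mul (f : K⟦X⟧) (n : ℕ) :
    coeff n ((1 - X) * (1 - C q * X) * f) =
      coeff n f - (1 + q) * (if 1 ≤ n then coeff (n - 1) f else 0) +
        q * (if 2 ≤ n then coeff (n - 2) f else 0) := by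
  have h : (1 - X) * (1 - C q * X) * f = f - C (1 + q) * (X ^ 1 * f) + C q * (X ^ 2 * f) := by
    simp only [map_add, map_one]; ring
  rw [h, map_add, map_sub, coeff_C_mul, coeff_C_mul, coeff_X_pow_mul', coeff_X_pow_mul']

end Series

section Hz
variable {K : Type*} [CommRing K] (q : K)

theorem hz_natCast_sub (r s n d : ℕ) :
    hz q r s ((n : ℤ) - d) = if d ≤ n then hh q r s (n - d) else 0 := by
  rw [hz]
  split_ifs <;> first | rfl | omega | (congr 1; omega)

theorem hz_succ_succ (r s : ℕ) (n : ℤ) :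
    hz q (r + 1) (s + 1) n =
      (1 + q) * hz q (r + 1) (s + 1) (n - 1) - q * hz q (r + 1) (s + 1) (n - 2) + hz q r s n := by
  rcases lt_or_ge n 0 with hn | hn
  · simp only [hz]
    rw [if_neg (by omega), if_neg (by omega), if_neg (by omega), if_neg (by omega)]
    ring
  lift n to ℕ using hn
  have key := coeff_one_sub_X_mul_one_sub_C_mul_X_mul q
    ((mk fun _ => (1 : K)) ^ (r + 1) * (mk fun k => q ^ k) ^ (s + 1)) n
  rw [← hh_series_eq_mul] at key
  have h d := hz_natCast_sub q (r + 1) (s + 1) n d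
  have h₀ : hz q (r + 1) (s + 1) n = hh q (r + 1) (s + 1) n := by simpa using h 0
  have h₁ := h 1
  have h₂ := h 2
  have h' : hz q r s n = hh q r s n := by simpa using hz_natCast_sub q r s n 0
  push_cast at h₁ h₂
  rw [h₀, h₁, h₂, h']
  simp only [hh, key]
  ring

end Hz

section Gdef
variable {K : Type*} [CommRing K] (q : K)

theorem gdef_sub (m k : ℤ) :
    gdef q m (m - k) = hz q (k + 1) k (m - 2 * k) + hz q k (k + 1) (m - 2 * k) := by
  rw [gdef]
  ring_nf

theorem gdef_sub_eq_zero {m k : ℤ} (h : k < 0 ∨ m < 2 * k) : gdef q m (m - k) = 0 := by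
  rw [gdef_sub, hz, hz, if_neg (by omega), if_neg (by omega), add_zero]

theorem gdef_self (n : ℕ) : gdef q n n = 1 + q ^ n := by
  simpa [hz, hh] using gdef_sub q n 0

theorem gdef_sub_add_two (m : ℕ) (k : ℤ) :
    gdef q (m + 2) (m + 2 - k) =
      (1 + q) * gdef q (m + 1) (m + 1 - k) - q * gdef q m (m - k) + gdef q m (m - (k - 1)) := by
  rcases lt_trichotomy k 0 with hk | rfl | hk
  · simp only [gdef_sub_eq_zero q (Or.inl hk), gdef_sub_eq_zero q (Or.inl (by omega : k - 1 < 0))]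
    ring
  · have h₀ := gdef_self q m
    have h₁ := gdef_self q (m + 1)
    have h₂ := gdef_self q (m + 2)
    push_cast at h₁ h₂
    rw [gdef_sub_eq_zero q (Or.inl (by omega : (0 : ℤ) - 1 < 0)), sub_zero, sub_zero, sub_zero,
      h₀, h₁, h₂]
    ring
  · lift k to ℕ using hk.le
    obtain ⟨j, rfl⟩ : ∃ j, k = j + 1 := ⟨k - 1, by omega⟩
    have h₁ := hz_succ_succ q (j + 1) j (m + 2 - 2 * (j + 1))
    have h₂ := hz_succ_succ q j (j + 1) (m + 2 - 2 * (j + 1))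
    simp only [gdef_sub]
    push_cast at h₁ h₂ ⊢
    ring_nf at h₁ h₂ ⊢
    linear_combination h₁ + h₂

end Gdef

section HomogeneousSum
open Finset
variable {K : Type*} [CommRing K]

def homogeneousSum (c : ℤ → K) (y z : K) (m : ℕ) : K :=
  ∑ p ∈ antidiagonal m, c p.1 * z ^ p.1 * y ^ p.2

variable (c : ℤ → K) (y z : K)

theorem homogeneousSum_succ {m : ℕ} (hc : c (m + 1) = 0) :
    homogeneousSum c y z (m + 1) = y * homogeneousSum c y z m := by
  rw [homogeneousSum, Nat.sum_antidiagonal_succ', homogeneousSum, mul_sum]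
  push_cast
  rw [hc, zero_mul, zero_mul, zero_add]
  exact sum_congr rfl fun p _ => by ring

theorem homogeneousSum_succ_shift (hc : c (-1) = 0) (m : ℕ) :
    homogeneousSum (fun k => c (k - 1)) y z (m + 1) = z * homogeneousSum c y z m := by
  rw [homogeneousSum, Nat.sum_antidiagonal_succ, homogeneousSum, mul_sum]
  push_cast
  rw [hc, zero_mul, zero_mul, zero_add]
  exact sum_congr rfl fun p _ => by rw [add_sub_cancel_right]; ring

end HomogeneousSum

theorem homogeneousSum_gdef_add_two {K : Type*} [CommRing K] (q y z : K) (m n : ℕ) :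
    homogeneousSum (fun k => gdef q (m + 2 : ℕ) ((m + 2 : ℕ) - k)) y z n =
      (1 + q) * homogeneousSum (fun k => gdef q (m + 1 : ℕ) ((m + 1 : ℕ) - k)) y z n
        - q * homogeneousSum (fun k => gdef q m (m - k)) y z n
        + homogeneousSum (fun k => gdef q m (m - (k - 1))) y z n := by
  simp only [homogeneousSum, Finset.mul_sum, ← Finset.sum_sub_distrib, ← Finset.sum_add_distrib]
  refine Finset.sum_congr rfl fun p _ => ?_
  push_cast
  rw [gdef_sub_add_two]
  ring

theorem pow_add_pow_eq_homogeneousSum {K : Type*} [CommRing K] (q a b y z : K)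
    (hsum : a + b = (1 + q) * y) (hprod : a * b = q * y ^ 2 - y * z) (m : ℕ) :
    a ^ m + b ^ m = homogeneousSum (fun k => gdef q m (m - k)) y z m := by
  induction m using Nat.twoStepInduction with
  | zero =>
    have h := gdef_self q 0
    simp_all [homogeneousSum]
  | one =>
    have h₁ := gdef_self q 1
    have h₀ : gdef q 1 (1 - 1) = 0 := gdef_sub_eq_zero q (Or.inr (by norm_num))
    simp_all [homogeneousSum, Finset.Nat.sum_antidiagonal_succ]
  | more m ih₀ ih₁ =>
    have vanish {n : ℕ} {k : ℤ} (h : n < 2 * k) : gdef q n (n - k) = 0 :=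
      gdef_sub_eq_zero q (Or.inr h)
    have hnext : homogeneousSum (fun k => gdef q (m + 1 : ℕ) ((m + 1 : ℕ) - k)) y z (m + 2) =
        y * homogeneousSum (fun k => gdef q (m + 1 : ℕ) ((m + 1 : ℕ) - k)) y z (m + 1) :=
      homogeneousSum_succ _ _ _ (vanish (by omega))
    have hcur : homogeneousSum (fun k => gdef q m (m - k)) y z (m + 2) =
        y * (y * homogeneousSum (fun k => gdef q m (m - k)) y z m) := by
      rw [homogeneousSum_succ _ _ _ (vanish (by omega)),
        homogeneousSum_succ _ _ _ (vanish (by omega))]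
    have hshift : homogeneousSum (fun k => gdef q m (m - (k - 1))) y z (m + 2) =
        z * (y * homogeneousSum (fun k => gdef q m (m - k)) y z m) := by
      rw [homogeneousSum_succ_shift (fun k => gdef q m (m - k)) _ _
          (gdef_sub_eq_zero q (Or.inl (by omega))), homogeneousSum_succ _ _ _ (vanish (by omega))]
    rw [homogeneousSum_gdef_add_two, hnext, hcur, hshift, ← ih₀, ← ih₁]
    linear_combination (a ^ (m + 1) + b ^ (m + 1)) * hsum - (a ^ m + b ^ m) * hprod

theorem homogeneousSum_div_pow {K : Type*} [Field K] (c : ℤ → K) (y : K) {z : K} (hz0 : z ≠ 0)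
    (m : ℕ) :
    homogeneousSum c y z m / z ^ m =
      ∑ k ∈ Finset.range (m + 1), c k * y ^ (m - k) * (z ^ (m - k))⁻¹ := by
  rw [homogeneousSum,
    Finset.Nat.sum_antidiagonal_eq_sum_range_succ (fun i j => c i * z ^ i * y ^ j), Finset.sum_div]
  refine Finset.sum_congr rfl fun k hk => ?_
  obtain ⟨i, rfl⟩ := Nat.exists_eq_add_of_le (Finset.mem_range_succ_iff.mp hk)
  rw [Nat.add_sub_cancel_left, pow_add]
  field_simp

section QInt
variable {K : Type*} [Field K] {q : K}

theorem qint_succ (hq : q ≠ 1) (n : ℕ) : qint q (n + 1) = 1 + q * qint q n := by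
  have : 1 - q ≠ 0 := sub_ne_zero.mpr hq.symm
  rw [qint, qint]
  field_simp
  ring

theorem qint_add_two_mul_qint (hq : q ≠ 1) (n : ℕ) :
    qint q (n + 2) * qint q n = qint q (n + 1) ^ 2 - q ^ n := by
  have : 1 - q ≠ 0 := sub_ne_zero.mpr hq.symm
  simp only [qint]
  field_simp
  ring

end QInt

theorem Xl_pow_add_general {K : Type*} [Field K] (q : K) (hq0 : q ≠ 0) (hq1 : q ≠ 1)
    (m l : ℕ) (hl : 1 ≤ l) :
    Xl q l ^ m + Xl q (l - 1) ^ m =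
      ∑ k ∈ Finset.range (m / 2 + 1),
        gdef q (m : ℤ) ((m : ℤ) - k) * qint q l ^ (2 * (m - k)) * (q ^ (l * (m - k)))⁻¹ := by
  obtain ⟨j, rfl⟩ : ∃ j, l = j + 1 := ⟨l - 1, by omega⟩
  have hX : Xl q (j + 1 - 1) = q * qint q j * qint q (j + 1) / q ^ (j + 1) := by
    rw [Nat.add_sub_cancel, Xl, pow_succ]
    field_simp
  have hsum : qint q (j + 1) * qint q (j + 1 + 1) + q * qint q j * qint q (j + 1) =
      (1 + q) * qint q (j + 1) ^ 2 := by
    rw [qint_succ hq1 (j + 1), qint_succ hq1 j]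
    ring
  have hprod : qint q (j + 1) * qint q (j + 1 + 1) * (q * qint q j * qint q (j + 1)) =
      q * (qint q (j + 1) ^ 2) ^ 2 - qint q (j + 1) ^ 2 * q ^ (j + 1) := by
    linear_combination q * qint q (j + 1) ^ 2 * qint_add_two_mul_qint hq1 j
  rw [Xl, hX, div_pow, div_pow, ← add_div, pow_add_pow_eq_homogeneousSum q _ _ _ _ hsum hprod,
    homogeneousSum_div_pow _ _ (pow_ne_zero _ hq0)]
  symm
  refine Finset.sum_subset (fun k hk => ?_) (fun k hk hk' => ?_) |>.trans
    (Finset.sum_congr rfl fun k _ => by rw [pow_mul, pow_mul])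
  · simp only [Finset.mem_range] at hk ⊢; omega
  · simp only [Finset.mem_range] at hk hk'
    rw [gdef_sub_eq_zero q (Or.inr (by omega)), zero_mul, zero_mul]

/-- for `m ≥ 1` and `l ≥ 1`,
`X_l^m + X_{l-1}^m = ∑_{k≥0} g_{m,m-k}(q) [l]^{2(m-k)} q^{-l(m-k)}`;
the sum is finite, over `0 ≤ k ≤ ⌊m/2⌋`. -/
theorem Xl_pow_add {K : Type*} [Field K] (q : K) (hq0 : q ≠ 0) (hq1 : q ≠ 1)
    (m l : ℕ) (hm : 1 ≤ m) (hl : 1 ≤ l) :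
    Xl q l ^ m + Xl q (l - 1) ^ m =
      ∑ k ∈ Finset.range (m / 2 + 1),
        gdef q (m : ℤ) ((m : ℤ) - k) * qint q l ^ (2 * (m - k)) * (q ^ (l * (m - k)))⁻¹ :=
  Xl_pow_add_general q hq0 hq1 m l hl
end

section
/- Define c_{k,m}(q) = h_{2m-k}({1,q²}^{k-m+1}) + q·h_{2m-k-1}({1,q²}^{k-m+1}) and Q_{m,k}(q) = det_{0≤i,j≤k-1}( c_{m-k+i+1, m-k+j}(q) ). Then Q_{m,k}(q) has nonnegative integer coefficients for all 1 ≤ k < m. -/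
/-- `c_{k,m}(q) = h_{2m-k}({1,q²}^{k-m+1}) + q·h_{2m-k-1}({1,q²}^{k-m+1})`. -/
noncomputable def cP (k m : ℤ) : Polynomial ℤ :=
  hz ((Polynomial.X : Polynomial ℤ) ^ 2) (k - m + 1) (k - m + 1) (2 * m - k) +
    Polynomial.X *
      hz ((Polynomial.X : Polynomial ℤ) ^ 2) (k - m + 1) (k - m + 1) (2 * m - k - 1)

/-- `Q_{m,k}(q) = det_{0≤i,j≤k-1}( c_{m-k+i+1,m-k+j}(q) )`, over `ℤ[q]`. -/
noncomputable def Qdet (m k : ℕ) : Polynomial ℤ :=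
  Matrix.det (Matrix.of fun i j : Fin k =>
    cP ((m : ℤ) - k + i + 1) ((m : ℤ) - k + j))

/-!
Write `m = k + d`. The entry `c_{d+i+1,d+j}` is the total weight of the lattice paths with
up-steps and flat steps from height `2j+1` to height `2i+4` that have length `d+i+2`, or length
`d+i+1` and an extra factor `q`; a flat step weighs `q²` at even and `1` at odd heights.
By the Lindström–Gessel–Viennot argument, exchanging the tails of two paths at the first point
where paths meet is a sign-reversing, weight-preserving involution on the intersecting families,
and a non-intersecting family joins each start to the end in its own row. So `Q_{m,k}` is the
total weight of the non-intersecting families.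
-/

open Finset Polynomial

namespace Polynomial

variable (R : Type*) [Semiring R] [PartialOrder R] [IsOrderedRing R]

def nonnegCoeffs : Subsemiring R[X] where
  carrier := {p | ∀ n, 0 ≤ p.coeff n}
  mul_mem' {p q} hp hq n := by
    rw [coeff_mul]
    exact sum_nonneg fun x _ => mul_nonneg (hp x.1) (hq x.2)
  one_mem' n := by
    rw [coeff_one]
    split_ifs <;> simp
  add_mem' {p q} hp hq n := by
    rw [coeff_add]
    exact add_nonneg (hp n) (hq n)
  zero_mem' n := by simp

variable {R}

theorem mem_nonnegCoeffs {p : R[X]} : p ∈ nonnegCoeffs R ↔ ∀ n, 0 ≤ p.coeff n := Iff.rfl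

theorem X_mem_nonnegCoeffs : (X : R[X]) ∈ nonnegCoeffs R := fun n => by
  rw [coeff_X]
  split_ifs <;> simp

end Polynomial

namespace PowerSeries

variable {R : Type*} [CommSemiring R]

theorem mk_pow_eq_one_add (c : R) : mk (c ^ ·) = 1 + X * (C c * mk (c ^ ·)) := by
  ext (_ | n)
  · simp
  · simp [coeff_succ_X_mul, pow_succ, mul_comm]

theorem coeff_succ_mul_mk_pow (f : R⟦X⟧) (c : R) (n : ℕ) :
    coeff (n + 1) (f * mk (c ^ ·)) = c * coeff n (f * mk (c ^ ·)) + coeff (n + 1) f := by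
  conv_lhs => rw [mk_pow_eq_one_add]
  rw [mul_add, mul_one, map_add, mul_left_comm, coeff_succ_X_mul, mul_left_comm, coeff_C_mul,
    add_comm]

theorem coeff_zero_mul_mk_pow (f : R⟦X⟧) (c : R) : coeff 0 (f * mk (c ^ ·)) = coeff 0 f := by
  simp

end PowerSeries

section LatticePaths

variable {R : Type*}

/-- The height after `t` steps of the lattice path that starts at height `s` and takes an
up-step at each position in `U` and a flat step everywhere else. -/
def pathHeight (s : ℕ) (U : Finset ℕ) (t : ℕ) : ℕ := s + #{x ∈ U | x < t}

/-- The weight of the path of length `X`: each flat step contributes the weight `w y` of the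
height `y` it runs at. -/
def pathWeight [CommMonoid R] (w : ℕ → R) (s X : ℕ) (U : Finset ℕ) : R :=
  ∏ x ∈ range X \ U, w (pathHeight s U x)

def latticePaths (s e X : ℕ) : Finset (Finset ℕ) := {U ∈ (range X).powerset | s + #U = e}

def pathSum [CommSemiring R] (w : ℕ → R) (s e X : ℕ) : R :=
  ∑ U ∈ latticePaths s e X, pathWeight w s X U

theorem mem_latticePaths {s e X : ℕ} {U : Finset ℕ} :
    U ∈ latticePaths s e X ↔ U ⊆ range X ∧ s + #U = e := by
  simp [latticePaths]

variable {s : ℕ} {U : Finset ℕ}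

@[simp] theorem pathHeight_zero : pathHeight s U 0 = s := by simp [pathHeight]

theorem pathHeight_succ (t : ℕ) :
    pathHeight s U (t + 1) = pathHeight s U t + if t ∈ U then 1 else 0 := by
  have hpt (x : ℕ) :
      (if x < t + 1 then 1 else 0) = (if x < t then 1 else 0) + if x = t then 1 else 0 := by
    split_ifs <;> omega
  simp only [pathHeight, card_filter, hpt, sum_add_distrib, sum_ite_eq', add_assoc]

theorem pathHeight_monotone : Monotone (pathHeight s U) := fun _ _ h =>
  Nat.add_le_add_left (card_le_card fun x hx => by
    simp only [mem_filter] at hx ⊢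
    exact ⟨hx.1, hx.2.trans_le h⟩) s

theorem pathHeight_le_add (t u : ℕ) : pathHeight s U (t + u) ≤ pathHeight s U t + u := by
  induction u with
  | zero => simp
  | succ u ih =>
    rw [← add_assoc, pathHeight_succ]
    split_ifs <;> omega

theorem pathHeight_of_subset_range {X t : ℕ} (hU : U ⊆ range X) (ht : X ≤ t) :
    pathHeight s U t = s + #U := by
  rw [pathHeight, filter_true_of_mem fun x hx => (mem_range.mp (hU hx)).trans_le ht]

theorem pathWeight_succ_of_subset [CommMonoid R] (w : ℕ → R) {X : ℕ} (hU : U ⊆ range X) :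
    pathWeight w s (X + 1) U = pathWeight w s X U * w (s + #U) := by
  have hX : X ∉ U := fun h => by simpa using hU h
  rw [pathWeight, pathWeight, range_add_one, insert_sdiff_of_notMem _ hX,
    prod_insert (by simp), pathHeight_of_subset_range hU le_rfl, mul_comm]

theorem pathWeight_succ_insert [CommMonoid R] (w : ℕ → R) (X : ℕ) :
    pathWeight w s (X + 1) (insert X U) = pathWeight w s X U := by
  rw [pathWeight, pathWeight, range_add_one, insert_sdiff_insert,
    sdiff_insert_of_notMem (by simp)]
  refine prod_congr rfl fun x hx => ?_
  have hxX : x < X := mem_range.mp (mem_sdiff.mp hx).1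
  rw [pathHeight, pathHeight, filter_insert, if_neg (by omega)]

variable [CommSemiring R] (w : ℕ → R)

theorem pathSum_succ_succ (e X : ℕ) :
    pathSum w s (e + 1) (X + 1) = w (e + 1) * pathSum w s (e + 1) X + pathSum w s e X := by
  simp only [pathSum, latticePaths, sum_filter, range_add_one,
    sum_powerset_insert (notMem_range_self (n := X)), mul_sum]
  congr 1 <;> refine sum_congr rfl fun U hU => ?_ <;> rw [mem_powerset] at hU
  · rw [pathWeight_succ_of_subset w hU]
    split_ifs with h
    · rw [h, mul_comm]
    · rw [mul_zero]
  · rw [pathWeight_succ_insert, card_insert_of_notMem fun h => by simpa using hU h]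
    simp only [← add_assoc, add_left_inj]

theorem pathSum_self (X : ℕ) : pathSum w s s X = w s ^ X := by
  have : latticePaths s s X = {∅} := by
    ext U
    simp only [mem_latticePaths, mem_singleton, add_eq_left, card_eq_zero]
    constructor
    · exact And.right
    · rintro rfl
      simp
  simp [pathSum, this, pathWeight, pathHeight]

theorem pathSum_eq_zero_of_lt {e X : ℕ} (h : s + X < e) : pathSum w s e X = 0 :=
  sum_eq_zero fun U hU => by
    obtain ⟨hsub, hcard⟩ := mem_latticePaths.mp hU
    have := card_le_card hsub
    rw [card_range] at this
    omega

theorem pathSum_eq_zero_of_lt_left {e X : ℕ} (h : e < s) : pathSum w s e X = 0 :=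
  sum_eq_zero fun U hU => by
    have := (mem_latticePaths.mp hU).2
    omega

/-- The paths from height `s` to `s + r` are counted by the complete homogeneous symmetric
functions of the level weights `w s, …, w (s + r)`. -/
theorem pathSum_eq_coeff_prod (r n : ℕ) :
    pathSum w s (s + r) (r + n) =
      PowerSeries.coeff n (∏ y ∈ range (r + 1), PowerSeries.mk (w (s + y) ^ ·)) := by
  induction r generalizing n with
  | zero => simp [pathSum_self]
  | succ r ihr =>
    rw [prod_range_succ]
    induction n with
    | zero =>
      rw [PowerSeries.coeff_zero_mul_mk_pow, ← ihr, ← add_assoc, add_zero, add_zero,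
        pathSum_succ_succ, pathSum_eq_zero_of_lt w (by omega), mul_zero, zero_add]
    | succ n ihn =>
      rw [PowerSeries.coeff_succ_mul_mk_pow, ← ihn, ← ihr, ← add_assoc, ← add_assoc,
        pathSum_succ_succ, add_assoc r, add_comm 1 n, ← add_assoc]

end LatticePaths

section Entries

variable {K : Type*} [CommSemiring K] (q : K)

def levelWeight (y : ℕ) : K := if Even y then q else 1

theorem levelWeight_mem (S : Subsemiring K) (hq : q ∈ S) (y : ℕ) : levelWeight q y ∈ S := by
  unfold levelWeight
  split_ifs
  exacts [hq, S.one_mem]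

theorem prod_range_levelWeight (j t : ℕ) :
    ∏ y ∈ range (2 * t), PowerSeries.mk (levelWeight q (2 * j + 1 + y) ^ ·) =
      (PowerSeries.mk (1 ^ ·) * PowerSeries.mk (q ^ ·)) ^ t := by
  induction t with
  | zero => simp
  | succ t ih =>
    have hodd : ¬ Even (2 * j + 1 + 2 * t) := by simp [parity_simps]
    have heven : Even (2 * j + 1 + (2 * t + 1)) := by simp [parity_simps]
    rw [mul_add, mul_one, prod_range_succ, prod_range_succ, ih, levelWeight, if_neg hodd,
      levelWeight, if_pos heven, pow_succ, mul_assoc]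

theorem hh_eq_coeff (t n : ℕ) :
    hh q t t n = PowerSeries.coeff n ((PowerSeries.mk (1 ^ ·) * PowerSeries.mk (q ^ ·)) ^ t) := by
  simp [hh, mul_pow]

theorem hz_natCast (r s n : ℕ) : hz q r s n = hh q r s n := by simp [hz]

theorem hz_of_neg {r s n : ℤ} (hn : n < 0) : hz q r s n = 0 := by
  rw [hz, if_neg (by omega)]

/-- `h_{L+2j-2i-3}({1,q}^{i-j+2})` counts the paths of length `L` from height `2j+1` to height
`2i+4` in which flat steps at even heights have weight `q`. -/
theorem hz_eq_pathSum (i j L : ℕ) :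
    hz q ((i : ℤ) - j + 2) ((i : ℤ) - j + 2) ((L : ℤ) + 2 * j - 2 * i - 3) =
      pathSum (levelWeight q) (2 * j + 1) (2 * i + 4) L := by
  rcases le_or_gt j (i + 1) with hji | hij
  · obtain ⟨t, ht⟩ := Nat.exists_eq_add_of_le hji
    have hr : (i : ℤ) - j + 2 = ((t + 1 : ℕ) : ℤ) := by push_cast; omega
    have he : 2 * i + 4 = 2 * j + 1 + (2 * t + 1) := by omega
    rcases le_or_gt (2 * t + 1) L with hL | hL
    · obtain ⟨n, rfl⟩ := Nat.exists_eq_add_of_le hL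
      have hn : ((2 * t + 1 + n : ℕ) : ℤ) + 2 * j - 2 * i - 3 = (n : ℤ) := by push_cast; omega
      rw [hr, hn, hz_natCast, he, pathSum_eq_coeff_prod, show 2 * t + 1 + 1 = 2 * (t + 1) by ring,
        prod_range_levelWeight, hh_eq_coeff]
    · rw [hz_of_neg q (by omega), pathSum_eq_zero_of_lt _ (by omega)]
  · rw [pathSum_eq_zero_of_lt_left _ (by omega), hz]
    split_ifs with h
    · rw [show ((i : ℤ) - j + 2).toNat = 0 by omega,
        show ((L : ℤ) + 2 * j - 2 * i - 3).toNat = L + 1 by omega]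
      simp [hh]
    · rfl

theorem cP_eq_pathSum (d i j : ℕ) :
    cP ((d : ℤ) + i + 1) ((d : ℤ) + j) =
      pathSum (levelWeight (X ^ 2)) (2 * j + 1) (2 * i + 4) (d + i + 2) +
        X * pathSum (levelWeight (X ^ 2)) (2 * j + 1) (2 * i + 4) (d + i + 1) := by
  rw [cP, show (d : ℤ) + i + 1 - (d + j) + 1 = i - j + 2 by ring,
    show 2 * ((d : ℤ) + j) - (d + i + 1) = ((d + i + 2 : ℕ) : ℤ) + 2 * j - 2 * i - 3 by
      push_cast; ring,
    show ((d + i + 2 : ℕ) : ℤ) + 2 * j - 2 * i - 3 - 1 =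
        ((d + i + 1 : ℕ) : ℤ) + 2 * j - 2 * i - 3 by
      push_cast; ring,
    hz_eq_pathSum, hz_eq_pathSum]

end Entries

def pathSet (L : Finset ℕ) (s e : ℕ) : Finset (ℕ × Finset ℕ) :=
  L.biUnion fun X => {X} ×ˢ latticePaths s e X

theorem mem_pathSet {L : Finset ℕ} {s e : ℕ} {p : ℕ × Finset ℕ} :
    p ∈ pathSet L s e ↔ p.1 ∈ L ∧ p.2 ∈ latticePaths s e p.1 := by
  rcases p with ⟨X, U⟩
  simp [pathSet]

theorem sum_pathSet {R : Type*} [CommSemiring R] (c : ℕ → R) (w : ℕ → R) (L : Finset ℕ)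
    (s e : ℕ) :
    ∑ p ∈ pathSet L s e, c p.1 * pathWeight w s p.1 p.2 =
      ∑ X ∈ L, c X * pathSum w s e X := by
  rw [sum_finset_product' _ _ _ (fun _ => mem_pathSet)
    (f := fun X U => c X * pathWeight w s X U)]
  simp [pathSum, mul_sum]

theorem cP_eq_sum_pathSet (d i j : ℕ) :
    cP ((d : ℤ) + i + 1) ((d : ℤ) + j) =
      ∑ p ∈ pathSet {d + i + 1, d + i + 2} (2 * j + 1) (2 * i + 4),
        (if p.1 = d + i + 1 then X else 1) *
          pathWeight (levelWeight (X ^ 2)) (2 * j + 1) p.1 p.2 := by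
  rw [sum_pathSet (fun X' => if X' = d + i + 1 then X else 1), sum_pair (by omega),
    cP_eq_pathSum]
  simp [add_comm]

section Splice

def splice (t : ℕ) (U U' : Finset ℕ) : Finset ℕ := {x ∈ U | x < t} ∪ {x ∈ U' | t ≤ x}

variable {t : ℕ} {U U' : Finset ℕ} {s s' : ℕ}

@[simp] theorem splice_self : splice t U U = U := by
  ext x
  simp only [splice, mem_union, mem_filter]
  by_cases hx : x < t <;> simp [hx, not_lt.mp]

theorem splice_splice : splice t (splice t U U') (splice t U' U) = U := by
  ext x
  simp only [splice, mem_union, mem_filter]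
  by_cases hx : x < t <;> simp [hx, not_lt.mp, not_le.mpr]

theorem splice_subset_range {X : ℕ} (ht : t ≤ X) (hU' : U' ⊆ range X) :
    splice t U U' ⊆ range X := by
  intro x hx
  simp only [splice, mem_union, mem_filter] at hx
  rcases hx with ⟨-, hx⟩ | ⟨hx, -⟩
  · exact mem_range.mpr (hx.trans_le ht)
  · exact hU' hx

theorem pathHeight_eq_add {x : ℕ} (hx : t ≤ x) :
    pathHeight s U x = pathHeight s U t + #{y ∈ U | t ≤ y ∧ y < x} := by
  rw [pathHeight, pathHeight, add_assoc, ← card_union_of_disjoint]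
  · congr 2
    ext y
    simp only [mem_filter, mem_union]
    grind
  · exact disjoint_filter.mpr fun _ _ h => by omega

theorem pathHeight_splice_of_le {x : ℕ} (hx : x ≤ t) :
    pathHeight s (splice t U U') x = pathHeight s U x := by
  simp only [pathHeight, splice, filter_union, filter_filter]
  congr 2
  ext y
  simp only [mem_union, mem_filter]
  grind

theorem pathHeight_splice_of_ge {x : ℕ} (h : pathHeight s U t = pathHeight s' U' t)
    (hx : t ≤ x) : pathHeight s (splice t U U') x = pathHeight s' U' x := by
  rw [pathHeight_eq_add hx, pathHeight_eq_add hx, pathHeight_splice_of_le le_rfl, h]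
  congr 2
  ext y
  simp only [splice, mem_union, mem_filter]
  grind

theorem add_card_splice (h : pathHeight s U t = pathHeight s' U' t) :
    s + #(splice t U U') = s' + #U' := by
  rw [splice, card_union_of_disjoint (disjoint_left.mpr fun x hx hx' => by
      simp only [mem_filter] at hx hx'
      omega),
    ← add_assoc, ← pathHeight, h, pathHeight, add_assoc,
    ← card_filter_add_card_filter_not (s := U') (· < t)]
  simp only [not_lt]

variable {R : Type*} [CommMonoid R] (w : ℕ → R)

def headWeight (s X : ℕ) (U : Finset ℕ) (t : ℕ) : R :=
  ∏ x ∈ range X \ U with x < t, w (pathHeight s U x)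

def tailWeight (s X : ℕ) (U : Finset ℕ) (t : ℕ) : R :=
  ∏ x ∈ range X \ U with t ≤ x, w (pathHeight s U x)

theorem headWeight_mul_tailWeight (s X : ℕ) (U : Finset ℕ) (t : ℕ) :
    headWeight w s X U t * tailWeight w s X U t = pathWeight w s X U := by
  simp only [headWeight, tailWeight, ← not_lt]
  exact prod_filter_mul_prod_filter_not _ _ _

theorem pathWeight_splice {X X' : ℕ} (ht : t ≤ X) (ht' : t ≤ X')
    (h : pathHeight s U t = pathHeight s' U' t) :
    pathWeight w s X' (splice t U U') = headWeight w s X U t * tailWeight w s' X' U' t := by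
  rw [← headWeight_mul_tailWeight w s X' _ t, headWeight, headWeight, tailWeight, tailWeight]
  congr 1
  · refine prod_congr ?_ fun x hx => ?_
    · ext x
      simp only [splice, mem_filter, mem_sdiff, mem_range, mem_union]
      grind
    · rw [pathHeight_splice_of_le (mem_filter.mp hx).2.le]
  · refine prod_congr ?_ fun x hx => ?_
    · ext x
      simp only [splice, mem_filter, mem_sdiff, mem_range, mem_union]
      grind
    · rw [pathHeight_splice_of_ge h (mem_filter.mp hx).2]

end Splice

section Switch

variable {ι : Type*} (s : ι → ℕ) (F : ι → ℕ × Finset ℕ)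

/-- In a family `F` of lattice paths, path `j` starts at height `s j`, has length `(F j).1` and
up-steps `(F j).2`. -/
def Meet (t : ℕ) (j j' : ι) : Prop :=
  j ≠ j' ∧ t ≤ (F j).1 ∧ t ≤ (F j').1 ∧
    pathHeight (s j) (F j).2 t = pathHeight (s j') (F j').2 t

def Intersecting : Prop := ∃ t j j', Meet s F t j j'

noncomputable def meetTime : ℕ := sInf {t | ∃ j j', Meet s F t j j'}

section

variable {s F} {t : ℕ} {j j' : ι}

theorem Meet.symm (h : Meet s F t j j') : Meet s F t j' j :=
  ⟨h.1.symm, h.2.2.1, h.2.1, h.2.2.2.symm⟩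

theorem exists_meet_meetTime (h : Intersecting s F) : ∃ j j', Meet s F (meetTime s F) j j' :=
  Nat.sInf_mem (let ⟨t, ht⟩ := h; ⟨t, ht⟩)

theorem not_meet_of_lt_meetTime (ht : t < meetTime s F) : ¬ Meet s F t j j' :=
  fun h => Nat.notMem_of_lt_sInf ht ⟨j, j', h⟩

end

variable [LinearOrder ι] [Fintype ι]

open Classical in
noncomputable def meetingPairs : Finset (ι ×ₗ ι) :=
  {p | Meet s F (meetTime s F) (ofLex p).1 (ofLex p).2}

noncomputable def switchPerm : Equiv.Perm ι :=
  if h : (meetingPairs s F).Nonempty then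
    Equiv.swap (ofLex ((meetingPairs s F).min' h)).1 (ofLex ((meetingPairs s F).min' h)).2
  else 1

/-- Paths fixed by `switchPerm s F` are unchanged, as `splice t U U = U`. -/
noncomputable def switchTails : ι → ℕ × Finset ℕ := fun j =>
  ((F (switchPerm s F j)).1, splice (meetTime s F) (F j).2 (F (switchPerm s F j)).2)

variable {s F} {t : ℕ} {j j' : ι}

theorem switchPerm_eq_swap (h : Intersecting s F) :
    ∃ j j', Meet s F (meetTime s F) j j' ∧ switchPerm s F = Equiv.swap j j' := by
  obtain ⟨j, j', hm⟩ := exists_meet_meetTime h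
  have hne : (meetingPairs s F).Nonempty := ⟨toLex (j, j'), by simpa [meetingPairs] using hm⟩
  refine ⟨_, _, ?_, dif_pos hne⟩
  simpa [meetingPairs] using (meetingPairs s F).min'_mem hne

theorem switchPerm_eq_one (h : ¬ Intersecting s F) : switchPerm s F = 1 :=
  dif_neg fun ⟨p, hp⟩ => h ⟨_, _, _, by simpa [meetingPairs] using hp⟩

theorem switchPerm_apply_eq_or_meet (j : ι) :
    switchPerm s F j = j ∨ Meet s F (meetTime s F) j (switchPerm s F j) := by
  by_cases h : Intersecting s F
  · obtain ⟨a, b, hab, he⟩ := switchPerm_eq_swap h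
    rw [he, Equiv.swap_apply_def]
    split_ifs with ha hb
    · exact Or.inr (ha ▸ hab)
    · exact Or.inr (hb ▸ hab.symm)
    · exact Or.inl rfl
  · simp [switchPerm_eq_one h]

theorem switchPerm_mul_self : switchPerm s F * switchPerm s F = 1 := by
  by_cases h : Intersecting s F
  · obtain ⟨a, b, -, he⟩ := switchPerm_eq_swap h
    rw [he, Equiv.swap_mul_self]
  · rw [switchPerm_eq_one h, mul_one]

theorem sign_switchPerm (h : Intersecting s F) : Equiv.Perm.sign (switchPerm s F) = -1 := by
  obtain ⟨a, b, hab, he⟩ := switchPerm_eq_swap h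
  rw [he, Equiv.Perm.sign_swap hab.1]

theorem le_fst_switchTails_iff (ht : t ≤ meetTime s F) (j : ι) :
    t ≤ (switchTails s F j).1 ↔ t ≤ (F j).1 := by
  rcases switchPerm_apply_eq_or_meet (s := s) (F := F) j with h | h
  · simp [switchTails, h]
  · exact ⟨fun _ => ht.trans h.2.1, fun _ => ht.trans h.2.2.1⟩

theorem meet_switchTails_iff (ht : t ≤ meetTime s F) :
    Meet s (switchTails s F) t j j' ↔ Meet s F t j j' := by
  have hheight (j : ι) : pathHeight (s j) (switchTails s F j).2 t = pathHeight (s j) (F j).2 t :=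
    pathHeight_splice_of_le ht
  simp only [Meet, le_fst_switchTails_iff ht, hheight]

theorem meetTime_switchTails (h : Intersecting s F) :
    meetTime s (switchTails s F) = meetTime s F := by
  obtain ⟨j, j', hm⟩ := exists_meet_meetTime h
  have hm' := (meet_switchTails_iff le_rfl).mpr hm
  refine le_antisymm (Nat.sInf_le ⟨j, j', hm'⟩) (not_lt.mp fun hlt => ?_)
  obtain ⟨a, b, hab⟩ := exists_meet_meetTime ⟨_, j, j', hm'⟩
  exact not_meet_of_lt_meetTime hlt ((meet_switchTails_iff hlt.le).mp hab)

theorem intersecting_switchTails (h : Intersecting s F) : Intersecting s (switchTails s F) :=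
  let ⟨j, j', hm⟩ := exists_meet_meetTime h
  ⟨_, j, j', (meet_switchTails_iff le_rfl).mpr hm⟩

theorem switchPerm_switchTails (h : Intersecting s F) :
    switchPerm s (switchTails s F) = switchPerm s F := by
  have hpairs : meetingPairs s (switchTails s F) = meetingPairs s F := by
    ext p
    simp only [meetingPairs, mem_filter, mem_univ, true_and, meetTime_switchTails h,
      meet_switchTails_iff le_rfl]
  simp only [switchPerm, hpairs]

theorem switchTails_switchTails (h : Intersecting s F) : switchTails s (switchTails s F) = F := by
  funext j
  have hinv : switchPerm s F (switchPerm s F j) = j := by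
    rw [← Equiv.Perm.mul_apply, switchPerm_mul_self, Equiv.Perm.one_apply]
  simp only [switchTails, switchPerm_switchTails h, meetTime_switchTails h, hinv, splice_splice]

theorem switchTails_mem_pathSet {L : ι → Finset ℕ} {e : ι → ℕ} {σ : Equiv.Perm ι}
    (hF : ∀ j, F j ∈ pathSet (L (σ j)) (s j) (e (σ j))) (j : ι) :
    switchTails s F j ∈
      pathSet (L ((σ * switchPerm s F) j)) (s j) (e ((σ * switchPerm s F) j)) := by
  rcases switchPerm_apply_eq_or_meet (s := s) (F := F) j with h | h
  · simpa [switchTails, h] using hF j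
  · obtain ⟨hL, hU⟩ := mem_pathSet.mp (hF (switchPerm s F j))
    rw [mem_latticePaths] at hU
    rw [mem_pathSet, mem_latticePaths, Equiv.Perm.mul_apply]
    exact ⟨hL, splice_subset_range h.2.2.1 hU.1, (add_card_splice h.2.2.2).trans hU.2⟩

variable {R : Type*} [CommMonoid R]

theorem pathWeight_switchTails (w : ℕ → R) (j : ι) :
    pathWeight w (s j) (switchTails s F j).1 (switchTails s F j).2 =
      headWeight w (s j) (F j).1 (F j).2 (meetTime s F) *
        tailWeight w (s (switchPerm s F j)) (F (switchPerm s F j)).1 (F (switchPerm s F j)).2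
          (meetTime s F) := by
  rcases switchPerm_apply_eq_or_meet (s := s) (F := F) j with h | h
  · simp only [switchTails, h, splice_self, headWeight_mul_tailWeight]
  · exact pathWeight_splice w h.2.1 h.2.2.1 h.2.2.2

/-- Switching tails permutes the heads and the tails of the paths among themselves. -/
theorem prod_switchTails (c : ι → ℕ → R) (w : ℕ → R) (σ : Equiv.Perm ι) :
    ∏ j, c ((σ * switchPerm s F) j) (switchTails s F j).1 *
        pathWeight w (s j) (switchTails s F j).1 (switchTails s F j).2 =
      ∏ j, c (σ j) (F j).1 * pathWeight w (s j) (F j).1 (F j).2 := by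
  simp only [pathWeight_switchTails, prod_mul_distrib, Equiv.Perm.mul_apply]
  simp only [switchTails]
  rw [Equiv.prod_comp (switchPerm s F) fun j => c (σ j) (F j).1,
    Equiv.prod_comp (switchPerm s F) fun j =>
      tailWeight w (s j) (F j).1 (F j).2 (meetTime s F),
    ← prod_mul_distrib]
  simp only [headWeight_mul_tailWeight]

end Switch

theorem Equiv.Perm.exists_lt_and_apply_lt_of_ne_one {ι : Type*} [LinearOrder ι] [Finite ι]
    {σ : Equiv.Perm ι} (hσ : σ ≠ 1) : ∃ j j', j < j' ∧ σ j' < σ j := by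
  by_contra! h
  have hmono : StrictMono σ := fun j j' hjj' =>
    (h j j' hjj').lt_of_ne fun he => hjj'.ne (σ.injective he)
  apply hσ
  ext j
  exact congrArg (· j) (Subsingleton.elim (hmono.orderIsoOfSurjective σ σ.surjective)
    (OrderIso.refl ι))

theorem exists_le_eq_of_lt_of_ge {f g : ℕ → ℕ} (hf : ∀ t, f (t + 1) ≤ f t + 1)
    (hg : Monotone g) (h0 : f 0 < g 0) {T : ℕ} (hT : g T ≤ f T) : ∃ t ≤ T, f t = g t := by
  classical
  have hex : ∃ t, g t ≤ f t := ⟨T, hT⟩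
  have hfind := Nat.find_spec hex
  obtain ⟨t, ht⟩ := Nat.exists_eq_add_one_of_ne_zero (n := Nat.find hex) fun h => by
    rw [h] at hfind
    omega
  have hbefore : f t < g t := not_le.mp (Nat.find_min hex (by omega))
  rw [ht] at hfind
  have hstep : g t ≤ g (t + 1) := hg t.le_succ
  exact ⟨t + 1, ht ▸ Nat.find_min' hex hT, by have := hf t; omega⟩

section Crossing

variable {ι : Type*} [LinearOrder ι] [Fintype ι] {s e : ι → ℕ} {L : ι → Finset ℕ}

/-- If `j < j'` but `σ j' < σ j`, path `j` starts below path `j'` and is still weakly above it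
when path `j'` ends, so the two meet. -/
theorem intersecting_of_ne_one (hs : StrictMono s)
    (hL : ∀ i i', i' < i → ∀ X ∈ L i, ∀ X' ∈ L i', X' ≤ X ∧ e i' + X ≤ e i + X')
    {σ : Equiv.Perm ι} {F : ι → ℕ × Finset ℕ}
    (hF : ∀ j, F j ∈ pathSet (L (σ j)) (s j) (e (σ j))) (hσ : σ ≠ 1) :
    Intersecting s F := by
  obtain ⟨j, j', hjj', hσjj'⟩ := σ.exists_lt_and_apply_lt_of_ne_one hσ
  obtain ⟨hX, hU⟩ := mem_pathSet.mp (hF j)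
  obtain ⟨hX', hU'⟩ := mem_pathSet.mp (hF j')
  rw [mem_latticePaths] at hU hU'
  obtain ⟨hle, hend⟩ := hL _ _ hσjj' _ hX _ hX'
  have hjX := pathHeight_of_subset_range (s := s j) hU.1 le_rfl
  have hj'X' := pathHeight_of_subset_range (s := s j') hU'.1 le_rfl
  have hdrop := pathHeight_le_add (s := s j) (U := (F j).2) (F j').1 ((F j).1 - (F j').1)
  rw [Nat.add_sub_cancel' hle] at hdrop
  obtain ⟨t, ht, heq⟩ := exists_le_eq_of_lt_of_ge (f := pathHeight (s j) (F j).2)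
    (g := pathHeight (s j') (F j').2) (fun t => pathHeight_le_add t 1)
    pathHeight_monotone (by simpa using hs hjj') (T := (F j').1) (by omega)
  exact ⟨t, j, j', hjj'.ne, ht.trans hle, ht, heq⟩

end Crossing

theorem Matrix.det_mem_of_involution {ι α R : Type*} [Fintype ι] [DecidableEq ι] [CommRing R]
    (S : Subsemiring R) (P : ι → ι → Finset α) (w : ι → ι → α → R)
    (hw : ∀ i j p, w i j p ∈ S) (Bad : Equiv.Perm ι × (ι → α) → Prop)
    (g : Equiv.Perm ι × (ι → α) → Equiv.Perm ι × (ι → α))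
    (hg_mem : ∀ x, (∀ j, x.2 j ∈ P (x.1 j) j) → Bad x →
      ∀ j, (g x).2 j ∈ P ((g x).1 j) j)
    (hg_bad : ∀ x, (∀ j, x.2 j ∈ P (x.1 j) j) → Bad x → Bad (g x))
    (hg_invol : ∀ x, (∀ j, x.2 j ∈ P (x.1 j) j) → Bad x → g (g x) = x)
    (hg_sign : ∀ x, Bad x → Equiv.Perm.sign (g x).1 = -Equiv.Perm.sign x.1)
    (hg_weight : ∀ x, (∀ j, x.2 j ∈ P (x.1 j) j) → Bad x →
      ∏ j, w ((g x).1 j) j ((g x).2 j) = ∏ j, w (x.1 j) j (x.2 j))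
    (h_good : ∀ x, (∀ j, x.2 j ∈ P (x.1 j) j) → ¬ Bad x → x.1 = 1) :
    (Matrix.of fun i j => ∑ p ∈ P i j, w i j p).det ∈ S := by
  classical
  set C : Finset (Equiv.Perm ι × (ι → α)) :=
    (univ.sigma fun σ => Fintype.piFinset fun j => P (σ j) j).map
      (Equiv.sigmaEquivProd _ _).toEmbedding
  have hC' (x : Equiv.Perm ι × (ι → α)) :
      x ∈ C ↔ x.1 ∈ univ ∧ x.2 ∈ Fintype.piFinset fun j => P (x.1 j) j := by
    simp [C, Finset.mem_map_equiv]
  have hC : ∀ x, x ∈ C ↔ ∀ j, x.2 j ∈ P (x.1 j) j := fun x => by simp [hC']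
  set f : Equiv.Perm ι × (ι → α) → R :=
    fun x => Equiv.Perm.sign x.1 * ∏ j, w (x.1 j) j (x.2 j)
  have hdet : (Matrix.of fun i j => ∑ p ∈ P i j, w i j p).det = ∑ x ∈ C, f x := by
    rw [sum_finset_product' C univ (fun σ => Fintype.piFinset fun j => P (σ j) j) hC'
      (f := fun σ F => f (σ, F)), det_apply']
    simp only [f, of_apply, prod_univ_sum, mul_sum]
  have hbad : ∑ x ∈ C with Bad x, f x = 0 := by
    refine sum_involution (fun x _ => g x) (fun x hx => ?_) (fun x hx _ he => ?_) (fun x hx => ?_)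
      (fun x hx => ?_) <;> obtain ⟨hxC, hxB⟩ := mem_filter.mp hx <;> rw [hC] at hxC
    · simp only [f, hg_weight x hxC hxB, hg_sign x hxB]
      push_cast
      ring
    · have hsign := hg_sign x hxB
      rw [he] at hsign
      exact units_ne_neg_self _ hsign
    · exact mem_filter.mpr ⟨(hC _).mpr (hg_mem x hxC hxB), hg_bad x hxC hxB⟩
    · exact hg_invol x hxC hxB
  rw [hdet, ← sum_filter_add_sum_filter_not C Bad, hbad, zero_add]
  refine sum_mem fun x hx => ?_
  obtain ⟨hxC, hxG⟩ := mem_filter.mp hx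
  simp only [f, h_good x ((hC x).mp hxC) hxG, Equiv.Perm.sign_one, Units.val_one, Int.cast_one,
    one_mul]
  exact prod_mem fun j _ => hw _ _ _

theorem det_pathMatrix_mem {ι R : Type*} [LinearOrder ι] [Fintype ι] [CommRing R]
    (S : Subsemiring R) {s e : ι → ℕ} {L : ι → Finset ℕ} (hs : StrictMono s)
    (hL : ∀ i i', i' < i → ∀ X ∈ L i, ∀ X' ∈ L i', X' ≤ X ∧ e i' + X ≤ e i + X')
    {c : ι → ℕ → R} (hc : ∀ i X, c i X ∈ S) {w : ℕ → R} (hw : ∀ y, w y ∈ S) :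
    (Matrix.of fun i j =>
      ∑ p ∈ pathSet (L i) (s j) (e i), c i p.1 * pathWeight w (s j) p.1 p.2).det ∈ S := by
  refine Matrix.det_mem_of_involution S (fun i j => pathSet (L i) (s j) (e i))
    (fun i j p => c i p.1 * pathWeight w (s j) p.1 p.2)
    (fun i j p => mul_mem (hc i p.1) (prod_mem fun _ _ => hw _))
    (fun x => Intersecting s x.2) (fun x => (x.1 * switchPerm s x.2, switchTails s x.2))
    (fun _ hF _ => switchTails_mem_pathSet hF) (fun _ _ hB => intersecting_switchTails hB)
    (fun x _ hB => ?_) (fun x hB => ?_) (fun x _ _ => prod_switchTails c w x.1)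
    (fun _ hF hG => not_not.mp fun hσ => hG (intersecting_of_ne_one hs hL hF hσ))
  · simp only [switchPerm_switchTails hB, switchTails_switchTails hB, mul_assoc,
      switchPerm_mul_self, mul_one]
  · simp only [Equiv.Perm.sign_mul, sign_switchPerm hB, mul_neg, mul_one]

theorem Qdet_eq_det_pathMatrix (k d : ℕ) :
    Qdet (k + d) k = (Matrix.of fun i j : Fin k =>
      ∑ p ∈ pathSet {d + i + 1, d + i + 2} (2 * j + 1) (2 * i + 4),
        (if p.1 = d + i + 1 then X else 1) *
          pathWeight (levelWeight (X ^ 2)) (2 * j + 1) p.1 p.2).det := by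
  rw [Qdet]
  refine congrArg Matrix.det (Matrix.ext fun i j => ?_)
  rw [Matrix.of_apply, Matrix.of_apply, ← cP_eq_sum_pathSet]
  congr 1 <;> push_cast <;> ring

theorem Qdet_coeff_nonneg_general (m k : ℕ) (hk : k < m) (i : ℕ) :
    0 ≤ (Qdet m k).coeff i := by
  obtain ⟨d, rfl⟩ := Nat.exists_eq_add_of_le hk.le
  rw [Qdet_eq_det_pathMatrix]
  refine mem_nonnegCoeffs.mp (det_pathMatrix_mem (nonnegCoeffs ℤ)
    (s := fun j : Fin k => 2 * (j : ℕ) + 1) (e := fun r => 2 * (r : ℕ) + 4)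
    (L := fun r => {d + r + 1, d + r + 2}) (c := fun r n => if n = d + r + 1 then X else 1)
    (fun j j' h => by simp only; omega) (fun r r' h n hn n' hn' => ?_) (fun _ _ => ?_)
    (levelWeight_mem _ _ (pow_mem X_mem_nonnegCoeffs 2))) i
  · simp only [mem_insert, mem_singleton, Fin.lt_def] at h hn hn' ⊢
    omega
  · split_ifs
    exacts [X_mem_nonnegCoeffs, one_mem _]

/-- for `1 ≤ k < m`, `Q_{m,k}(q)` has nonnegative (integer) coefficients. -/
theorem Qdet_coeff_nonneg (m k : ℕ) (hk1 : 1 ≤ k) (hk : k < m) (i : ℕ) :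
    0 ≤ (Qdet m k).coeff i :=
  Qdet_coeff_nonneg_general m k hk i
end
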